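/- Let V be an (n+2)-dimensional vector space with nondegenerate symmetric form g and let I ∈ V with ι = g(I,I) ≠ 0. Let ℜ denote the space of algebraic curvature tensors (Riemann symmetries) on V and φ: ℜ → 𝔚 the map sending R to its totally trace-free (Weyl) part R̊_{ABCD} = R_{ABCD} - (g∧P)_{ABCD} with P_{AC} = (1/n)(R_{ABC}{}^B - J g_{AC}), J = (1/(2(n+1)))R_{AB}{}^{AB}. Then the kernel of φ restricted to I^⊥ = {R : I^A R_{ABCD} = 0} is one-dimensional, spanned by (g ∧ (g - (2/ι) I⊗I))_{ABCD}, where (Q∧P)_{ABCD} = Q_{AC}P_{BD} - Q_{BC}P_{AD} + Q_{BD}P_{AC} - Q_{AD}P_{BC}. -/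
import Mathlib


noncomputable section
open scoped BigOperators
open Matrix

/-- Rank-4 covariant tensors on `ℝ^N`. -/
abbrev T4 (N : ℕ) := Fin N → Fin N → Fin N → Fin N → ℝ

/-- Algebraic curvature tensors (Riemann symmetries). -/
def IsCurv {N : ℕ} (X : T4 N) : Prop :=
  (∀ A B C D, X A B C D = -X B A C D) ∧ (∀ A B C D, X A B C D = -X A B D C) ∧
    (∀ A B C D, X A B C D = X C D A B) ∧
    (∀ A B C D, X A B C D + X B C A D + X C A B D = 0)

/-- The product `(Q∧P)_{ABCD} = Q_{AC}P_{BD} - Q_{BC}P_{AD} + Q_{BD}P_{AC} - Q_{AD}P_{BC}`. -/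
def wedge4 {N : ℕ} (Q P : Fin N → Fin N → ℝ) : T4 N := fun A B C D =>
  Q A C * P B D - Q B C * P A D + Q B D * P A C - Q A D * P B C

/-- Ricci-type contraction `R_{ABC}{}^B` (trace over the 2nd and 4th slots). -/
def ricciT {N : ℕ} (gi : Fin N → Fin N → ℝ) (R : T4 N) : Fin N → Fin N → ℝ :=
  fun A C => ∑ b, ∑ d, gi b d * R A b C d

/-- The tensor `P_{AC} = (1/n)(R_{ABC}{}^B - J g_{AC})`, `J = R_{AB}{}^{AB}/(2(n+1))`,
where the ambient dimension is `N = n+2`. -/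
def schoutenT {N : ℕ} (n : ℕ) (g gi : Fin N → Fin N → ℝ) (R : T4 N) :
    Fin N → Fin N → ℝ := fun A C =>
  (1 / (n : ℝ)) * (ricciT gi R A C
    - ((1 / (2 * ((n : ℝ) + 1))) * ∑ a, ∑ c, gi a c * ricciT gi R a c) * g A C)

/-- The totally trace-free (Weyl) part `R̊ = R - g∧P` of an algebraic curvature
tensor. -/
def tfT {N : ℕ} (n : ℕ) (g gi : Fin N → Fin N → ℝ) (R : T4 N) : T4 N :=
  fun A B C D => R A B C D - wedge4 g (schoutenT n g gi R) A B C D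

/-! ### Auxiliary lemmas -/

section helpers
variable {N : ℕ} (g gi : Fin N → Fin N → ℝ)
  (hgsymm : ∀ a b, g a b = g b a)
  (hginv : ∀ a b, (∑ c, gi a c * g c b) = if a = b then (1 : ℝ) else 0)

include hginv in
lemma inv_comm' : ∀ a b, (∑ c, g a c * gi c b) = if a = b then (1 : ℝ) else 0 := by
  have h1 : (Matrix.of gi) * (Matrix.of g) = 1 := by
    ext a b
    simp [Matrix.mul_apply, Matrix.one_apply, hginv a b]
  have h2 : (Matrix.of g) * (Matrix.of gi) = 1 := mul_eq_one_comm.mpr h1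
  intro a b
  have := congrFun (congrFun h2 a) b
  simpa [Matrix.mul_apply, Matrix.one_apply] using this

include hgsymm hginv in
lemma gi_symm' : ∀ a b, gi a b = gi b a := by
  have h1 : (Matrix.of gi) * (Matrix.of g) = 1 := by
    ext a b
    simp [Matrix.mul_apply, Matrix.one_apply, hginv a b]
  have h2 : (Matrix.of g) * (Matrix.of gi) = 1 := mul_eq_one_comm.mpr h1
  have hG : (Matrix.of g)ᵀ = Matrix.of g := by
    ext a b; simp [Matrix.transpose_apply, hgsymm a b]
  have key : (Matrix.of gi)ᵀ = Matrix.of gi := by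
    calc (Matrix.of gi)ᵀ = (Matrix.of gi)ᵀ * ((Matrix.of g) * (Matrix.of gi)) := by
          rw [h2, mul_one]
      _ = ((Matrix.of gi)ᵀ * (Matrix.of g)ᵀ) * (Matrix.of gi) := by rw [hG, mul_assoc]
      _ = ((Matrix.of g) * (Matrix.of gi))ᵀ * (Matrix.of gi) := by
          rw [Matrix.transpose_mul]
      _ = Matrix.of gi := by rw [h2, Matrix.transpose_one, one_mul]
  intro a b
  have := congrFun (congrFun key b) a
  simpa [Matrix.transpose_apply] using this

include hgsymm hginv in
lemma trace_gig : ∑ b, ∑ d, gi b d * g b d = (N : ℝ) := by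
  have : ∀ b : Fin N, ∑ d, gi b d * g b d = 1 := by
    intro b
    have h := hginv b b
    rw [if_pos rfl] at h
    rw [← h]
    exact Finset.sum_congr rfl fun d _ => by rw [hgsymm b d]
  simp [this]

end helpers

section helpers2
variable {N : ℕ} (g gi : Fin N → Fin N → ℝ)
  (hgsymm : ∀ a b, g a b = g b a)
  (hginv : ∀ a b, (∑ c, gi a c * g c b) = if a = b then (1 : ℝ) else 0)
  (hginv2 : ∀ a b, (∑ c, g a c * gi c b) = if a = b then (1 : ℝ) else 0)
  (hgis : ∀ a b, gi a b = gi b a)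

include hgsymm hginv2 in
lemma sum_gig1 (C d : Fin N) : ∑ b, gi b d * g b C = if C = d then (1:ℝ) else 0 := by
  rw [← hginv2 C d]
  exact Finset.sum_congr rfl fun b _ => by rw [hgsymm b C]; ring

include hginv2 hgis in
lemma sum_gig2 (A b : Fin N) : ∑ d, gi b d * g A d = if A = b then (1:ℝ) else 0 := by
  rw [← hginv2 A b]
  exact Finset.sum_congr rfl fun d _ => by rw [hgis b d]; ring

include hginv in
lemma sum_gi_lI (I : Fin N → ℝ) (B : Fin N) :
    ∑ c, gi B c * (∑ e, g c e * I e) = I B := by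
  calc ∑ c, gi B c * (∑ e, g c e * I e) = ∑ c, ∑ e, gi B c * g c e * I e := by
        refine Finset.sum_congr rfl fun c _ => ?_
        rw [Finset.mul_sum]
        exact Finset.sum_congr rfl fun e _ => by ring
    _ = ∑ e, (∑ c, gi B c * g c e) * I e := by
        rw [Finset.sum_comm]
        exact Finset.sum_congr rfl fun e _ => by rw [Finset.sum_mul]
    _ = I B := by simp [hginv]

end helpers2

section ricci
variable {N : ℕ} (g gi : Fin N → Fin N → ℝ)
  (htr : ∑ b, ∑ d, gi b d * g b d = (N : ℝ))
  (h1 : ∀ C d, ∑ b, gi b d * g b C = if C = d then (1:ℝ) else 0)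
  (h2 : ∀ A b, ∑ d, gi b d * g A d = if A = b then (1:ℝ) else 0)

include htr h1 h2 in
lemma ricci_wedge (p : Fin N → Fin N → ℝ) (A C : Fin N) :
    ricciT gi (wedge4 g p) A C
      = g A C * (∑ b, ∑ d, gi b d * p b d) + ((N : ℝ) - 2) * p A C := by
  have expand : ∀ b d, gi b d * wedge4 g p A b C d
      = g A C * (gi b d * p b d) - (gi b d * g b C) * p A d
        + (gi b d * g b d) * p A C - (gi b d * g A d) * p b C := by
    intro b d; simp only [wedge4]; ring
  have S1 : ∑ b, ∑ d, g A C * (gi b d * p b d)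
      = g A C * (∑ b, ∑ d, gi b d * p b d) := by
    simp [Finset.mul_sum]
  have S2 : ∑ b, ∑ d, (gi b d * g b C) * p A d = p A C := by
    rw [Finset.sum_comm]
    have : ∀ d, ∑ b, (gi b d * g b C) * p A d = (if C = d then (1:ℝ) else 0) * p A d := by
      intro d; rw [← Finset.sum_mul, h1 C d]
    simp [this]
  have S3 : ∑ b, ∑ d, (gi b d * g b d) * p A C = (N : ℝ) * p A C := by
    have : ∑ b, ∑ d, (gi b d * g b d) * p A C = (∑ b, ∑ d, gi b d * g b d) * p A C := by
      simp [Finset.sum_mul]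
    rw [this, htr]
  have S4 : ∑ b, ∑ d, (gi b d * g A d) * p b C = p A C := by
    have : ∀ b, ∑ d, (gi b d * g A d) * p b C = (if A = b then (1:ℝ) else 0) * p b C := by
      intro b; rw [← Finset.sum_mul, h2 A b]
    simp [this]
  calc ricciT gi (wedge4 g p) A C
      = ∑ b, ∑ d, (g A C * (gi b d * p b d) - (gi b d * g b C) * p A d
        + (gi b d * g b d) * p A C - (gi b d * g A d) * p b C) := by
        refine Finset.sum_congr rfl fun b _ => Finset.sum_congr rfl fun d _ => expand b d
    _ = (∑ b, ∑ d, g A C * (gi b d * p b d)) - (∑ b, ∑ d, (gi b d * g b C) * p A d)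
        + (∑ b, ∑ d, (gi b d * g b d) * p A C) - (∑ b, ∑ d, (gi b d * g A d) * p b C) := by
        simp [Finset.sum_add_distrib, Finset.sum_sub_distrib]
    _ = g A C * (∑ b, ∑ d, gi b d * p b d) + ((N : ℝ) - 2) * p A C := by
        rw [S1, S2, S3, S4]; ring
end ricci

section sch
variable {n : ℕ} (hn : 1 ≤ n) (g gi : Fin (n+2) → Fin (n+2) → ℝ)
  (htr : ∑ b, ∑ d, gi b d * g b d = ((n+2 : ℕ) : ℝ))
  (hric : ∀ (p : Fin (n+2) → Fin (n+2) → ℝ) A C,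
    ricciT gi (wedge4 g p) A C
      = g A C * (∑ b, ∑ d, gi b d * p b d) + (((n+2 : ℕ) : ℝ) - 2) * p A C)

include hn htr hric in
lemma schouten_wedge (p : Fin (n+2) → Fin (n+2) → ℝ) (A C : Fin (n+2)) :
    schoutenT n g gi (wedge4 g p) A C = p A C := by
  set trp := ∑ b, ∑ d, gi b d * p b d with htrp
  have hscal : ∑ a, ∑ c, gi a c * ricciT gi (wedge4 g p) a c
      = (2 * ((n:ℝ) + 1)) * trp := by
    have key : ∀ (a c : Fin (n+2)), gi a c * ricciT gi (wedge4 g p) a c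
        = trp * (gi a c * g a c) + (((n+2:ℕ):ℝ) - 2) * (gi a c * p a c) := by
      intro a c; rw [hric p a c]; ring
    calc ∑ a, ∑ c, gi a c * ricciT gi (wedge4 g p) a c
        = ∑ a, ∑ c, (trp * (gi a c * g a c) + (((n+2:ℕ):ℝ) - 2) * (gi a c * p a c)) := by
          exact Finset.sum_congr rfl fun a _ => Finset.sum_congr rfl fun c _ => key a c
      _ = trp * (∑ a, ∑ c, gi a c * g a c) + (((n+2:ℕ):ℝ) - 2) * (∑ a, ∑ c, gi a c * p a c) := by
          simp [Finset.sum_add_distrib, Finset.mul_sum]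
      _ = (2 * ((n:ℝ) + 1)) * trp := by
          rw [htr, ← htrp]; push_cast; ring
  have hne : (n : ℝ) ≠ 0 := Nat.cast_ne_zero.mpr (by omega)
  have h2 : (2 * ((n:ℝ) + 1)) ≠ 0 := by positivity
  simp only [schoutenT]
  rw [hric p A C, hscal, ← htrp]
  push_cast
  field_simp
  ring

include hn htr hric in
lemma tf_wedge (p : Fin (n+2) → Fin (n+2) → ℝ) :
    tfT n g gi (wedge4 g p) = fun _ _ _ _ => (0:ℝ) := by
  funext A B C D
  have hs := schouten_wedge hn g gi htr hric p
  show wedge4 g p A B C D - wedge4 g (schoutenT n g gi (wedge4 g p)) A B C D = 0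
  simp only [wedge4, hs]
  ring
end sch

section curvw
variable {N : ℕ} (Q P : Fin N → Fin N → ℝ)
  (hQ : ∀ a b, Q a b = Q b a) (hP : ∀ a b, P a b = P b a)

include hQ hP in
lemma isCurv_wedge4 : IsCurv (wedge4 Q P) := by
  refine ⟨?_, ?_, ?_, ?_⟩
  · intro A B C D; simp only [wedge4]; ring
  · intro A B C D; simp only [wedge4]; ring
  · intro A B C D
    simp only [wedge4]
    rw [hQ C A, hQ D A, hQ D B, hQ C B, hP D B, hP C B, hP C A, hP D A]
    ring
  · intro A B C D
    simp only [wedge4]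
    rw [hQ B A, hQ C A, hQ C B, hP C A, hP B A, hP C B]
    ring
end curvw

section contr
variable {N : ℕ} (g : Fin N → Fin N → ℝ) (hgsymm : ∀ a b, g a b = g b a)
  (I : Fin N → ℝ)

include hgsymm in
lemma contract_I_wedge (p : Fin N → Fin N → ℝ) (B C D : Fin N) :
    (∑ A, I A * wedge4 g p A B C D)
      = (∑ e, g C e * I e) * p B D - g B C * (∑ A, I A * p A D)
        + g B D * (∑ A, I A * p A C) - (∑ e, g D e * I e) * p B C := by
  have expand : ∀ A, I A * wedge4 g p A B C D
      = (g C A * I A) * p B D - g B C * (I A * p A D)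
        + g B D * (I A * p A C) - (g D A * I A) * p B C := by
    intro A; simp only [wedge4]; rw [hgsymm C A, hgsymm D A]; ring
  calc (∑ A, I A * wedge4 g p A B C D)
      = ∑ A, ((g C A * I A) * p B D - g B C * (I A * p A D)
        + g B D * (I A * p A C) - (g D A * I A) * p B C) := by
        exact Finset.sum_congr rfl fun A _ => expand A
    _ = (∑ A, g C A * I A) * p B D - g B C * (∑ A, I A * p A D)
        + g B D * (∑ A, I A * p A C) - (∑ A, g D A * I A) * p B C := by
        simp [Finset.sum_add_distrib, Finset.sum_sub_distrib, Finset.sum_mul, Finset.mul_sum]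
    _ = _ := by rfl
end contr

section ricsym
variable {N : ℕ} (gi : Fin N → Fin N → ℝ) (hgis : ∀ a b, gi a b = gi b a)
  (R : T4 N) (hpair : ∀ A B C D, R A B C D = R C D A B)

include hgis hpair in
lemma ricci_symm (A C : Fin N) : ricciT gi R A C = ricciT gi R C A := by
  simp only [ricciT]
  calc ∑ b, ∑ d, gi b d * R A b C d
      = ∑ d, ∑ b, gi b d * R A b C d := Finset.sum_comm
    _ = ∑ d, ∑ b, gi d b * R C d A b := by
        refine Finset.sum_congr rfl fun d _ => Finset.sum_congr rfl fun b _ => ?_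
        rw [hgis d b, hpair C d A b]
    _ = ∑ b, ∑ d, gi b d * R C b A d := rfl
end ricsym

/-- for `I` with `ι = g(I,I) ≠ 0`, the kernel of the trace-free
projection `φ` restricted to `I^⊥ = {R : I^A R_{ABCD} = 0}` is one-dimensional,
spanned by `(g ∧ (g - (2/ι) I⊗I))_{ABCD}` (indices of `I` lowered with `g`). -/
theorem kernel_tracefree_on_Iperp {n : ℕ} (hn : 1 ≤ n)
    (g gi : Fin (n + 2) → Fin (n + 2) → ℝ)
    (hgsymm : ∀ a b, g a b = g b a)
    (hginv : ∀ a b, (∑ c, gi a c * g c b) = if a = b then (1 : ℝ) else 0)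
    (I : Fin (n + 2) → ℝ) (ι : ℝ)
    (hι : ι = ∑ a, ∑ b, g a b * I a * I b) (hι0 : ι ≠ 0) :
    (IsCurv (wedge4 g
          (fun a b => g a b - (2 / ι) * (∑ c, g a c * I c) * (∑ d, g b d * I d)))
        ∧ (∀ B C D, (∑ A, I A * wedge4 g
            (fun a b => g a b - (2 / ι) * (∑ c, g a c * I c) * (∑ d, g b d * I d))
            A B C D) = 0))
      ∧ (∀ R : T4 (n + 2), IsCurv R → (∀ B C D, (∑ A, I A * R A B C D) = 0) →
          ((tfT n g gi R = fun _ _ _ _ => (0 : ℝ))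
            ↔ ∃ c : ℝ, R = fun A B C D =>
                c * wedge4 g
                  (fun a b => g a b - (2 / ι) * (∑ e, g a e * I e) * (∑ d, g b d * I d))
                  A B C D)) := by
  have hginv2 := inv_comm' g gi hginv
  have hgis := gi_symm' g gi hgsymm hginv
  have htr := trace_gig g gi hgsymm hginv
  have h1 := sum_gig1 g gi hgsymm hginv2
  have h2 := sum_gig2 g gi hginv2 hgis
  have hric := ricci_wedge g gi htr h1 h2
  have htf0 := tf_wedge hn g gi htr hric
  have hnne : (n : ℝ) ≠ 0 := Nat.cast_ne_zero.mpr (by omega)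
  obtain ⟨lI, hlI⟩ : ∃ lI : Fin (n+2) → ℝ, ∀ a, lI a = ∑ e, g a e * I e :=
    ⟨_, fun _ => rfl⟩
  obtain ⟨hten, hhten⟩ : ∃ h : Fin (n+2) → Fin (n+2) → ℝ,
      ∀ a b, h a b = g a b - (2/ι) * lI a * lI b := ⟨_, fun _ _ => rfl⟩
  have funeq : (fun a b => g a b - (2 / ι) * (∑ c, g a c * I c) * (∑ d, g b d * I d))
      = hten := by
    funext a b
    rw [hhten a b, hlI a, hlI b]
  have hII : ∑ a, I a * lI a = ι := by
    rw [hι]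
    refine Finset.sum_congr rfl fun a _ => ?_
    rw [hlI a, Finset.mul_sum]
    exact Finset.sum_congr rfl fun b _ => by ring
  have hIgl : ∀ D, ∑ A, I A * g A D = lI D := by
    intro D; rw [hlI D]
    exact Finset.sum_congr rfl fun A _ => by rw [hgsymm A D]; ring
  have hIh : ∀ D, (∑ A, I A * hten A D) = -lI D := by
    intro D
    have key : ∀ A, I A * hten A D = I A * g A D - (2/ι) * lI D * (I A * lI A) := by
      intro A; rw [hhten A D]; ring
    calc ∑ A, I A * hten A D = ∑ A, (I A * g A D - (2/ι) * lI D * (I A * lI A)) :=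
          Finset.sum_congr rfl fun A _ => key A
      _ = (∑ A, I A * g A D) - (2/ι) * lI D * (∑ A, I A * lI A) := by
          simp [Finset.sum_sub_distrib, Finset.mul_sum]
      _ = -lI D := by
          rw [hIgl D, hII]
          field_simp
          ring
  have htsym : ∀ a b, hten a b = hten b a := by
    intro a b; rw [hhten a b, hhten b a, hgsymm a b]; ring
  refine ⟨⟨?_, ?_⟩, ?_⟩
  · rw [funeq]
    exact isCurv_wedge4 g hten hgsymm htsym
  · rw [funeq]
    intro B C D
    rw [contract_I_wedge g hgsymm I hten B C D]
    rw [← hlI C, ← hlI D, hIh D, hIh C, hhten B D, hhten B C]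
    ring
  · intro R hcurv hperp
    constructor
    · intro htf
      obtain ⟨P, hP⟩ : ∃ P, P = schoutenT n g gi R := ⟨_, rfl⟩
      have hR4 : ∀ A B C D, R A B C D = wedge4 g P A B C D := by
        intro A B C D
        have h0 := congrFun (congrFun (congrFun (congrFun htf A) B) C) D
        simp only [tfT] at h0
        rw [hP]
        linarith [h0]
      have hPsym : ∀ a b, P a b = P b a := by
        intro a b; rw [hP]
        simp only [schoutenT]
        rw [ricci_symm gi hgis R hcurv.2.2.1 a b, hgsymm a b]
      obtain ⟨q, hq⟩ : ∃ q : Fin (n+2) → ℝ, ∀ D, q D = ∑ A, I A * P A D :=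
        ⟨_, fun _ => rfl⟩
      have hE : ∀ B C D, lI C * P B D - g B C * q D + g B D * q C - lI D * P B C = 0 := by
        intro B C D
        have h0 := hperp B C D
        have h0' : ∑ A, I A * wedge4 g P A B C D = 0 := by
          rw [← h0]
          exact Finset.sum_congr rfl fun A _ => by rw [hR4]
        rw [contract_I_wedge g hgsymm I P B C D] at h0'
        rw [hlI C, hlI D, hq D, hq C]
        exact h0'
      obtain ⟨trP, htrP⟩ : ∃ t : ℝ, t = ∑ B, ∑ C, gi B C * P B C := ⟨_, rfl⟩
      have hqA : ∀ D, (n:ℝ) * q D = -(lI D * trP) := by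
        intro D
        have hzero : ∑ B, ∑ C, gi B C *
            (lI C * P B D - g B C * q D + g B D * q C - lI D * P B C) = 0 := by
          simp [hE]
        have expand : ∀ B C, gi B C *
            (lI C * P B D - g B C * q D + g B D * q C - lI D * P B C)
            = (gi B C * lI C) * P B D - (gi B C * g B C) * q D + (gi B C * g B D) * q C
              - lI D * (gi B C * P B C) := by intro B C; ring
        have hsplit : ∑ B, ∑ C, gi B C *
            (lI C * P B D - g B C * q D + g B D * q C - lI D * P B C)
            = (∑ B, ∑ C, (gi B C * lI C) * P B D) - (∑ B, ∑ C, (gi B C * g B C) * q D)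
              + (∑ B, ∑ C, (gi B C * g B D) * q C)
              - (∑ B, ∑ C, lI D * (gi B C * P B C)) := by
          simp only [expand]
          simp [Finset.sum_add_distrib, Finset.sum_sub_distrib]
        have A1 : ∑ B, ∑ C, (gi B C * lI C) * P B D = q D := by
          rw [hq D]
          refine Finset.sum_congr rfl fun B _ => ?_
          rw [← Finset.sum_mul]
          simp only [hlI]
          rw [sum_gi_lI g gi hginv I B]
        have A2 : ∑ B, ∑ C, (gi B C * g B C) * q D = ((n:ℝ)+2) * q D := by
          have hs : ∑ B, ∑ C, (gi B C * g B C) * q D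
              = (∑ B, ∑ C, gi B C * g B C) * q D := by
            simp [Finset.sum_mul]
          rw [hs, htr]; push_cast; ring
        have A3 : ∑ B, ∑ C, (gi B C * g B D) * q C = q D := by
          rw [Finset.sum_comm]
          have key : ∀ C, ∑ B, (gi B C * g B D) * q C
              = (if D = C then (1:ℝ) else 0) * q C := by
            intro C; rw [← Finset.sum_mul, h1 D C]
          simp [key]
        have A4 : ∑ B, ∑ C, lI D * (gi B C * P B C) = lI D * trP := by
          rw [htrP]; simp [Finset.mul_sum]
        rw [hsplit, A1, A2, A3, A4] at hzero
        linear_combination -hzero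
      obtain ⟨μ, hμ⟩ : ∃ μ : ℝ, μ = -(trP / (n:ℝ)) := ⟨_, rfl⟩
      have hqval : ∀ D, q D = μ * lI D := by
        intro D
        have h0 := hqA D
        rw [hμ]
        field_simp
        linarith [h0]
      have hPval : ∀ B D, P B D = (-μ) * (g B D - (2/ι) * lI B * lI D) := by
        intro B D
        have hzero : ∑ C, I C *
            (lI C * P B D - g B C * q D + g B D * q C - lI D * P B C) = 0 := by
          simp [hE]
        have expand : ∀ C, I C *
            (lI C * P B D - g B C * q D + g B D * q C - lI D * P B C)
            = (I C * lI C) * P B D - (I C * g B C) * q D + g B D * (I C * q C)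
              - lI D * (I C * P B C) := by intro C; ring
        have hsplit : ∑ C, I C *
            (lI C * P B D - g B C * q D + g B D * q C - lI D * P B C)
            = (∑ C, I C * lI C) * P B D - (∑ C, I C * g B C) * q D
              + g B D * (∑ C, I C * q C) - lI D * (∑ C, I C * P B C) := by
          simp only [expand]
          simp [Finset.sum_add_distrib, Finset.sum_sub_distrib, Finset.sum_mul,
            Finset.mul_sum]
        have C2 : ∑ C, I C * g B C = lI B := by
          rw [hlI B]
          exact Finset.sum_congr rfl fun C _ => by ring
        have C3 : ∑ C, I C * q C = μ * ι := by
          calc ∑ C, I C * q C = ∑ C, μ * (I C * lI C) :=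
                Finset.sum_congr rfl fun C _ => by rw [hqval C]; ring
            _ = μ * ι := by rw [← Finset.mul_sum, hII]
        have C4 : ∑ C, I C * P B C = μ * lI B := by
          calc ∑ C, I C * P B C = ∑ C, I C * P C B :=
                Finset.sum_congr rfl fun C _ => by rw [hPsym B C]
            _ = q B := (hq B).symm
            _ = μ * lI B := hqval B
        rw [hsplit, hII, C2, C3, C4, hqval D] at hzero
        have hrhs : ι * ((-μ) * (g B D - (2/ι) * lI B * lI D))
            = 2*μ*(lI B)*(lI D) - μ*ι*(g B D) := by
          field_simp; ring
        refine mul_left_cancel₀ hι0 ?_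
        rw [hrhs]
        linear_combination hzero
      refine ⟨-μ, ?_⟩
      funext A B C D
      rw [hR4 A B C D]
      simp only [wedge4]
      rw [hPval B D, hPval A D, hPval A C, hPval B C]
      simp only [hlI]
      ring
    · rintro ⟨c, rfl⟩
      have heq : (fun A B C D => c * wedge4 g
            (fun a b => g a b - (2 / ι) * (∑ e, g a e * I e) * (∑ d, g b d * I d))
            A B C D)
          = wedge4 g (fun a b =>
              c * (g a b - (2 / ι) * (∑ e, g a e * I e) * (∑ d, g b d * I d))) := by
        funext A B C D
        simp only [wedge4]
        ring
      rw [heq]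
      exact htf0 _
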